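/- arXiv:2504.14770 — 3 statements merged into one kernel-verified Lean document; each statement's English description precedes it below -/
import Mathlib

section
/- Let X₃ be the 3-element tribracket on {1,2,3} with operation [a,b,c] given by the 3-tensor (matrices indexed by a, rows by b, columns by c): a=1: [[1,3,2],[3,2,1],[2,1,3]]; a=2: [[3,2,1],[2,1,3],[1,3,2]]; a=3: [[2,1,3],[3,2,1],[1,3,2]]. The number of tuples (a,b,c,d,e,f,g,h) ∈ X₃⁸ satisfying [d,b,c] = a, [d,c,b] = e, [f,b,c] = e, [f,c,c] = a, [f,b,c] = g, [h,c,b] = g, and [h,b,c] = a is exactly 21. (This count is the tribracket coloring invariant Col^R_{X₃}(-9₁) of the reverse-oriented 2-knot 9₁ from Yoshikawa's table.) -/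
/-- The 3-element tribracket on `{1,2,3}` (encoded as `Fin 3`, with element `i ∈ {1,2,3}`
represented by `i - 1 : Fin 3`), given by the 3-tensor
a=1: [[1,3,2],[3,2,1],[2,1,3]]; a=2: [[3,2,1],[2,1,3],[1,3,2]]; a=3: [[2,1,3],[3,2,1],[1,3,2]]. -/
def t3 : Fin 3 → Fin 3 → Fin 3 → Fin 3 :=
  ![![![0,2,1],![2,1,0],![1,0,2]],
    ![![2,1,0],![1,0,2],![0,2,1]],
    ![![1,0,2],![2,1,0],![0,2,1]]]

set_option maxRecDepth 100000 in
set_option maxHeartbeats 4000000 in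
/-- The tribracket coloring count of the reverse-oriented 2-knot -9₁ in the tribracket X₃ is 21. -/
theorem col_X3_neg_9_1 :
    Nat.card {t : Fin 3 × Fin 3 × Fin 3 × Fin 3 × Fin 3 × Fin 3 × Fin 3 × Fin 3 //
      match t with
      | (a, b, c, d, e, f, g, h) =>
        t3 d b c = a ∧ t3 d c b = e ∧ t3 f b c = e ∧ t3 f c c = a ∧
        t3 f b c = g ∧ t3 h c b = g ∧ t3 h b c = a} = 21 := by
  rw [Nat.card_eq_fintype_card]
  decide
end

section
/- Let X₃ be the 3-element tribracket on {1,2,3} with operation [a,b,c] given by the 3-tensor (matrices indexed by a, rows by b, columns by c): a=1: [[1,3,2],[3,2,1],[2,1,3]]; a=2: [[3,2,1],[2,1,3],[1,3,2]]; a=3: [[2,1,3],[3,2,1],[1,3,2]]. The number of tuples (a,b,c,d,e,f,g,h,i,j) ∈ X₃¹⁰ satisfying the 10₃ equation system ([e,a,c]=b, [e,c,a]=d, [c,b,d]=f, [a,d,b]=f, [j,c,a]=b, [j,a,c]=d, [c,d,b]=i, [b,a,i]=d, [h,c,a]=b, [h,g,c]=b, [h,a,g]=b) is NOT equal to the number of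 tuples satisfying the reversed system ([b,c,a]=e, [d,a,c]=e, [f,d,b]=c, [f,b,d]=a, [b,a,c]=j, [d,c,a]=j, [i,b,d]=c, [d,i,a]=b, [b,a,c]=h, [b,c,g]=h, [b,g,a]=h). (These are the coloring counts of the 2-knot 10₃ and its reverse -10₃; their inequality is the computation proving that 10₃ is non-invertible.) -/
/-- Three-way sum over `Fin 3`. -/
def S3 (f : Fin 3 → ℕ) : ℕ := f 0 + f 1 + f 2

lemma card_prod3 {β : Type*} [Fintype β] (P : Fin 3 × β → Prop) [DecidablePred P] :
    Nat.card {t // P t} = S3 (fun a => Nat.card {y : β // P (a, y)}) := by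
  have : ∀ a : Fin 3, DecidablePred (fun y : β => P (a, y)) :=
    fun a y => inferInstanceAs (Decidable (P (a, y)))
  rw [Nat.card_congr (Equiv.subtypeProdEquivSigmaSubtype (fun a b => P (a, b))),
    Nat.card_eq_fintype_card, Fintype.card_sigma, Fin.sum_univ_three, S3]
  simp [Nat.card_eq_fintype_card]

lemma card_base3 (P : Fin 3 → Prop) [DecidablePred P] :
    Nat.card {x // P x} = S3 (fun a => if P a then 1 else 0) := by
  rw [Nat.card_eq_fintype_card, Fintype.card_subtype, Finset.card_filter,
    Fin.sum_univ_three, S3]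

abbrev F10 := Fin 3 × Fin 3 × Fin 3 × Fin 3 × Fin 3 × Fin 3 × Fin 3 × Fin 3 × Fin 3 × Fin 3

def P1 (t : F10) : Prop :=
  t3 t.2.2.2.2.1 t.1 t.2.2.1 = t.2.1 ∧ t3 t.2.2.2.2.1 t.2.2.1 t.1 = t.2.2.2.1 ∧ t3 t.2.2.1 t.2.1 t.2.2.2.1 = t.2.2.2.2.2.1 ∧ t3 t.1 t.2.2.2.1 t.2.1 = t.2.2.2.2.2.1 ∧ t3 t.2.2.2.2.2.2.2.2.2 t.2.2.1 t.1 = t.2.1 ∧ t3 t.2.2.2.2.2.2.2.2.2 t.1 t.2.2.1 = t.2.2.2.1 ∧ t3 t.2.2.1 t.2.2.2.1 t.2.1 = t.2.2.2.2.2.2.2.2.1 ∧ t3 t.2.1 t.1 t.2.2.2.2.2.2.2.2.1 = t.2.2.2.1 ∧ t3 t.2.2.2.2.2.2.2.1 t.2.2.1 t.1 = t.2.1 ∧ t3 t.2.2.2.2.2.2.2.1 t.2.2.2.2.2.2.1 t.2.2.1 = t.2.1 ∧ t3 t.2.2.2.2.2.2.2.1 t.1 t.2.2.2.2.2.2.1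 = t.2.1

def P2 (t : F10) : Prop :=
  t3 t.2.1 t.2.2.1 t.1 = t.2.2.2.2.1 ∧ t3 t.2.2.2.1 t.1 t.2.2.1 = t.2.2.2.2.1 ∧ t3 t.2.2.2.2.2.1 t.2.2.2.1 t.2.1 = t.2.2.1 ∧ t3 t.2.2.2.2.2.1 t.2.1 t.2.2.2.1 = t.1 ∧ t3 t.2.1 t.1 t.2.2.1 = t.2.2.2.2.2.2.2.2.2 ∧ t3 t.2.2.2.1 t.2.2.1 t.1 = t.2.2.2.2.2.2.2.2.2 ∧ t3 t.2.2.2.2.2.2.2.2.1 t.2.1 t.2.2.2.1 = t.2.2.1 ∧ t3 t.2.2.2.1 t.2.2.2.2.2.2.2.2.1 t.1 = t.2.1 ∧ t3 t.2.1 t.1 t.2.2.1 = t.2.2.2.2.2.2.2.1 ∧ t3 t.2.1 t.2.2.1 t.2.2.2.2.2.2.1 = t.2.2.2.2.2.2.2.1 ∧ t3 t.2.1 t.2.2.2.2.2.2.1 t.1 = t.2.2.2.2.2.2.2.1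

instance instP1 : DecidablePred P1 := fun _ => instDecidableAnd
instance instP2 : DecidablePred P2 := fun _ => instDecidableAnd

set_option maxRecDepth 10000 in
set_option maxHeartbeats 4000000 in
/-- The coloring counts of 10₃ and -10₃ in X₃ differ: 10₃ is non-invertible. -/
theorem col_X3_10_3_ne_neg :
    Nat.card {t : Fin 3 × Fin 3 × Fin 3 × Fin 3 × Fin 3 × Fin 3 × Fin 3 × Fin 3 × Fin 3 × Fin 3 //
      match t with
      | (a, b, c, d, e, f, g, h, i, j) =>
        t3 e a c = b ∧ t3 e c a = d ∧ t3 c b d = f ∧ t3 a d b = f ∧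
        t3 j c a = b ∧ t3 j a c = d ∧ t3 c d b = i ∧ t3 b a i = d ∧
        t3 h c a = b ∧ t3 h g c = b ∧ t3 h a g = b} ≠
    Nat.card {t : Fin 3 × Fin 3 × Fin 3 × Fin 3 × Fin 3 × Fin 3 × Fin 3 × Fin 3 × Fin 3 × Fin 3 //
      match t with
      | (a, b, c, d, e, f, g, h, i, j) =>
        t3 b c a = e ∧ t3 d a c = e ∧ t3 f d b = c ∧ t3 f b d = a ∧
        t3 b a c = j ∧ t3 d c a = j ∧ t3 i b d = c ∧ t3 d i a = b ∧
        t3 b a c = h ∧ t3 b c g = h ∧ t3 b g a = h} := by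
  show Nat.card {t : F10 // P1 t} ≠ Nat.card {t : F10 // P2 t}
  simp only [card_prod3, card_base3, P1, P2]
  decide
end

section
/- Let X₃ be the 3-element tribracket on {1,2,3} with operation [a,b,c] given by the 3-tensor (matrices indexed by a, rows by b, columns by c): a=1: [[1,3,2],[3,2,1],[2,1,3]]; a=2: [[3,2,1],[2,1,3],[1,3,2]]; a=3: [[2,1,3],[3,2,1],[1,3,2]]. The number of tuples (a,b,c,d,e) ∈ X₃⁵ satisfying [a,b,c] = e, [a,c,d] = e, and [a,d,b] = e is exactly 15, and the number of tuples (a,b,c,d,e) ∈ X₃⁵ satisfying a = [e,c,b], a = [e,d,c], and a = [e,b,d] is also exactly 15. (These counts are the tribracket coloring invariants Col^R_{X₃}(8₁) and Col^R_{X₃}(-8₁) of the spun trefoil 2-knot 8₁ and its reverse.) -/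
/-- The tribracket coloring counts of the spun trefoil 8₁ and its reverse -8₁ in X₃ are both 15. -/
theorem col_X3_8_1 :
    Nat.card {t : Fin 3 × Fin 3 × Fin 3 × Fin 3 × Fin 3 //
      match t with
      | (a, b, c, d, e) => t3 a b c = e ∧ t3 a c d = e ∧ t3 a d b = e} = 15 ∧
    Nat.card {t : Fin 3 × Fin 3 × Fin 3 × Fin 3 × Fin 3 //
      match t with
      | (a, b, c, d, e) => a = t3 e c b ∧ a = t3 e d c ∧ a = t3 e b d} = 15 := by
  constructor <;> · rw [Nat.card_eq_fintype_card]; decide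
end
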